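/- Let 𝒥₁ be the integral operator on L¹(∂Ω, π) with kernel |x−y|^{1+2α−d}, where ∂Ω is a compact C¹ hypersurface in ℝ^d and α > 0. Then 𝒥₁ is a weakly compact operator on L¹(∂Ω, π). -/

import Mathlib

open MeasureTheory Bornology

/-- An operator between normed spaces is weakly compact if it maps the closed unit ball
into a weakly compact set. -/
def IsWeaklyCompactOperator {X Y : Type*} [NormedAddCommGroup X] [NormedSpace ℝ X]
    [NormedAddCommGroup Y] [NormedSpace ℝ Y] (f : X → Y) : Prop :=
  ∃ K : Set (WeakSpace ℝ Y), IsCompact K ∧ f '' Metric.closedBall 0 1 ⊆ K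

/-!
The kernel `‖x - y‖ ^ t`, `t = 1 + 2α - d`, has order `t > 1 - d`: summing the Ahlfors bound
`π (B(y, r)) ≤ C r ^ (d - 1)` over dyadic annuli gives `∫_{B(y, r)} ‖x - y‖ ^ t dπ(x) ≲ r ^ (2α)`.
Hence the columns `y ↦ ‖· - y‖ ^ t` are bounded in `L¹(π)`, and they depend continuously on `y`:
small balls contribute little, and away from them `s ↦ s ^ t` is Lipschitz. On the compact
support `∂Ω` the columns are therefore uniformly approximated by kernels that are piecewise
constant in `y` on a finite partition. Since the `L¹` operator norm of a kernel operator is at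
most the supremum of its column norms, `𝒥₁` is an operator-norm limit of finite-rank operators,
hence compact, and a fortiori weakly compact.
-/

open Filter Topology Function Metric
open scoped ENNReal NNReal

theorem IsCompactOperator.isWeaklyCompactOperator {X Y : Type*} [NormedAddCommGroup X]
    [NormedSpace ℝ X] [NormedAddCommGroup Y] [NormedSpace ℝ Y] {T : X →L[ℝ] Y}
    (hT : IsCompactOperator T) : IsWeaklyCompactOperator T := by
  obtain ⟨K, hK, hTK⟩ := hT.image_closedBall_subset_compact (1 : ℝ)
  exact ⟨toWeakSpaceCLM ℝ Y '' K, hK.image (toWeakSpaceCLM ℝ Y).continuous,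
    fun y hy => ⟨y, hTK hy, rfl⟩⟩

theorem IsCompact.exists_measurable_partition {α : Type*} [TopologicalSpace α] [MeasurableSpace α]
    [OpensMeasurableSpace α] {F : Set α} (hF : IsCompact F) {P : α → α → Prop}
    (hP : ∀ z ∈ F, ∀ᶠ y in 𝓝[F] z, P y z) :
    ∃ (n : ℕ) (z : Fin n → α) (A : Fin n → Set α), (∀ i, z i ∈ F) ∧
      (∀ i, MeasurableSet (A i)) ∧ Pairwise (Disjoint on A) ∧ F ⊆ ⋃ i, A i ∧
      ∀ i, ∀ y ∈ A i, y ∈ F → P y (z i) := by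
  set U : α → Set α := fun z => interior {y | y ∈ F → P y z}
  obtain ⟨t, htF, hcov⟩ := hF.elim_nhds_subcover U fun z hz =>
    interior_mem_nhds.2 (eventually_nhdsWithin_iff.1 (hP z hz))
  set z : Fin t.card → α := fun i => t.equivFin.symm i
  have hU : ∀ i, MeasurableSet (U (z i)) := fun i => isOpen_interior.measurableSet
  refine ⟨t.card, z, disjointed (U ∘ z), fun i => htF _ (t.equivFin.symm i).2, fun i => ?_,
    disjoint_disjointed _, ?_, fun i y hy => interior_subset (disjointed_subset _ i hy)⟩
  · rw [disjointed_eq_inter_compl]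
    exact (hU i).inter (.iInter fun j => .iInter fun _ => (hU j).compl)
  · refine hcov.trans (Set.iUnion₂_subset fun w hw => ?_)
    rw [iUnion_disjointed]
    exact Set.subset_iUnion_of_subset (t.equivFin ⟨w, hw⟩) (by simp [z, U])

section KernelOperator

variable {α : Type*} [MeasurableSpace α] {μ : Measure α} [SFinite μ] {K : α → α → ℝ}

theorem lintegral_enorm_kernel_mul_le (hK : AEStronglyMeasurable (uncurry K) (μ.prod μ))
    {M : ℝ≥0} (hM : ∀ᵐ y ∂μ, ∫⁻ x, ‖K x y‖ₑ ∂μ ≤ M) {f : α → ℝ}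
    (hf : AEStronglyMeasurable f μ) :
    ∫⁻ p, ‖K p.1 p.2 * f p.2‖ₑ ∂μ.prod μ ≤ M * ∫⁻ y, ‖f y‖ₑ ∂μ := by
  rw [lintegral_prod_symm (fun p => ‖K p.1 p.2 * f p.2‖ₑ) (hK.mul hf.comp_snd).enorm,
    ← lintegral_const_mul' _ _ ENNReal.coe_ne_top]
  refine lintegral_mono_ae (hM.mono fun y hy => ?_)
  simp_rw [enorm_mul]
  rw [lintegral_mul_const' _ _ enorm_ne_top]
  exact mul_le_mul_left hy _

theorem integrable_kernel_mul (hK : AEStronglyMeasurable (uncurry K) (μ.prod μ))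
    {M : ℝ≥0} (hM : ∀ᵐ y ∂μ, ∫⁻ x, ‖K x y‖ₑ ∂μ ≤ M) {f : α → ℝ} (hf : Integrable f μ) :
    Integrable (fun p : α × α => K p.1 p.2 * f p.2) (μ.prod μ) :=
  ⟨hK.mul hf.1.comp_snd, (lintegral_enorm_kernel_mul_le hK hM hf.1).trans_lt
    (ENNReal.mul_lt_top ENNReal.coe_lt_top hf.2)⟩

theorem lintegral_enorm_integral_kernel_mul_le (hK : AEStronglyMeasurable (uncurry K) (μ.prod μ))
    {M : ℝ≥0} (hM : ∀ᵐ y ∂μ, ∫⁻ x, ‖K x y‖ₑ ∂μ ≤ M) {f : α → ℝ}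
    (hf : AEStronglyMeasurable f μ) :
    ∫⁻ x, ‖∫ y, K x y * f y ∂μ‖ₑ ∂μ ≤ M * ∫⁻ y, ‖f y‖ₑ ∂μ := calc
  _ ≤ ∫⁻ x, ∫⁻ y, ‖K x y * f y‖ₑ ∂μ ∂μ :=
    lintegral_mono fun _ => enorm_integral_le_lintegral_enorm _
  _ = ∫⁻ p, ‖K p.1 p.2 * f p.2‖ₑ ∂μ.prod μ :=
    (lintegral_prod (fun p => ‖K p.1 p.2 * f p.2‖ₑ) (hK.mul hf.comp_snd).enorm).symm
  _ ≤ M * ∫⁻ y, ‖f y‖ₑ ∂μ := lintegral_enorm_kernel_mul_le hK hM hf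

theorem enorm_toL1_integral_kernel_mul_le (hK : AEStronglyMeasurable (uncurry K) (μ.prod μ))
    {M : ℝ≥0} (hM : ∀ᵐ y ∂μ, ∫⁻ x, ‖K x y‖ₑ ∂μ ≤ M) (ψ : Lp ℝ 1 μ)
    (h : Integrable (fun x => ∫ y, K x y * ψ y ∂μ) μ) : ‖h.toL1 _‖ₑ ≤ M * ‖ψ‖ₑ := by
  simp only [Lp.enorm_def, eLpNorm_one_eq_lintegral_enorm]
  rw [lintegral_congr_ae ((Integrable.coeFn_toL1 h).mono fun x hx => congrArg enorm hx)]
  exact lintegral_enorm_integral_kernel_mul_le hK hM (Lp.aestronglyMeasurable ψ)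

noncomputable def kernelOperatorOfBound (hK : AEStronglyMeasurable (uncurry K) (μ.prod μ))
    {M : ℝ≥0} (hM : ∀ᵐ y ∂μ, ∫⁻ x, ‖K x y‖ₑ ∂μ ≤ M) : Lp ℝ 1 μ →L[ℝ] Lp ℝ 1 μ :=
  LinearMap.mkContinuous
    { toFun := fun ψ =>
        (integrable_kernel_mul hK hM (L1.integrable_coeFn ψ)).integral_prod_left.toL1 _
      map_add' := fun ψ φ => by
        rw [← Integrable.toL1_add, Integrable.toL1_eq_toL1_iff]
        filter_upwards [(integrable_kernel_mul hK hM (L1.integrable_coeFn ψ)).prod_right_ae,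
          (integrable_kernel_mul hK hM (L1.integrable_coeFn φ)).prod_right_ae] with x hψ hφ
        rw [Pi.add_apply, ← integral_add hψ hφ]
        refine integral_congr_ae ((Lp.coeFn_add ψ φ).mono fun y hy => ?_)
        simp only [hy, Pi.add_apply, mul_add]
      map_smul' := fun c ψ => by
        rw [RingHom.id_apply, ← Integrable.toL1_smul, Integrable.toL1_eq_toL1_iff]
        refine Eventually.of_forall fun x => ?_
        change ∫ y, K x y * (c • ψ) y ∂μ = c * ∫ y, K x y * ψ y ∂μ
        rw [← integral_const_mul]
        refine integral_congr_ae ((Lp.coeFn_smul c ψ).mono fun y hy => ?_)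
        simp only [hy, Pi.smul_apply, smul_eq_mul]
        ring }
    M fun ψ => by
      have h := enorm_toL1_integral_kernel_mul_le hK hM ψ
        (integrable_kernel_mul hK hM (L1.integrable_coeFn ψ)).integral_prod_left
      simp only [enorm_eq_nnnorm] at h
      exact_mod_cast h

open Classical in
/-- Junk value `0` unless `K` is a.e.-strongly measurable with essentially bounded column
norms. -/
noncomputable def kernelOperator (μ : Measure α) [SFinite μ] (K : α → α → ℝ) :
    Lp ℝ 1 μ →L[ℝ] Lp ℝ 1 μ :=
  if h : AEStronglyMeasurable (uncurry K) (μ.prod μ) ∧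
      ∃ M : ℝ≥0, ∀ᵐ y ∂μ, ∫⁻ x, ‖K x y‖ₑ ∂μ ≤ M then
    kernelOperatorOfBound h.1 h.2.choose_spec
  else 0

theorem exists_kernelOperator_apply_eq_toL1 (hK : AEStronglyMeasurable (uncurry K) (μ.prod μ))
    {M : ℝ≥0} (hM : ∀ᵐ y ∂μ, ∫⁻ x, ‖K x y‖ₑ ∂μ ≤ M) (ψ : Lp ℝ 1 μ) :
    ∃ h : Integrable (fun x => ∫ y, K x y * ψ y ∂μ) μ, kernelOperator μ K ψ = h.toL1 _ := by
  rw [kernelOperator, dif_pos ⟨hK, M, hM⟩]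
  exact ⟨(integrable_kernel_mul hK hM (L1.integrable_coeFn ψ)).integral_prod_left, rfl⟩

theorem coeFn_kernelOperator (hK : AEStronglyMeasurable (uncurry K) (μ.prod μ))
    {M : ℝ≥0} (hM : ∀ᵐ y ∂μ, ∫⁻ x, ‖K x y‖ₑ ∂μ ≤ M) (ψ : Lp ℝ 1 μ) :
    kernelOperator μ K ψ =ᵐ[μ] fun x => ∫ y, K x y * ψ y ∂μ := by
  obtain ⟨h, hT⟩ := exists_kernelOperator_apply_eq_toL1 hK hM ψ
  exact hT ▸ h.coeFn_toL1

theorem norm_kernelOperator_le (hK : AEStronglyMeasurable (uncurry K) (μ.prod μ))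
    {M : ℝ≥0} (hM : ∀ᵐ y ∂μ, ∫⁻ x, ‖K x y‖ₑ ∂μ ≤ M) : ‖kernelOperator μ K‖ ≤ M := by
  refine ContinuousLinearMap.opNorm_le_bound _ M.2 fun ψ => ?_
  obtain ⟨h, hT⟩ := exists_kernelOperator_apply_eq_toL1 hK hM ψ
  have := enorm_toL1_integral_kernel_mul_le hK hM ψ h
  rw [← hT] at this
  simp only [enorm_eq_nnnorm] at this
  exact_mod_cast this

theorem norm_kernelOperator_sub_le {K' : α → α → ℝ}
    (hK : AEStronglyMeasurable (uncurry K) (μ.prod μ)) {M : ℝ≥0}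
    (hM : ∀ᵐ y ∂μ, ∫⁻ x, ‖K x y‖ₑ ∂μ ≤ M) (hK' : AEStronglyMeasurable (uncurry K') (μ.prod μ))
    {M' : ℝ≥0} (hM' : ∀ᵐ y ∂μ, ∫⁻ x, ‖K' x y‖ₑ ∂μ ≤ M') {N : ℝ≥0}
    (hN : ∀ᵐ y ∂μ, ∫⁻ x, ‖K x y - K' x y‖ₑ ∂μ ≤ N) :
    ‖kernelOperator μ K - kernelOperator μ K'‖ ≤ N := by
  have hKK' : AEStronglyMeasurable (uncurry fun x y => K x y - K' x y) (μ.prod μ) := hK.sub hK'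
  suffices kernelOperator μ K - kernelOperator μ K' = kernelOperator μ fun x y => K x y - K' x y
    from this ▸ norm_kernelOperator_le hKK' hN
  ext1 ψ
  have hψ := L1.integrable_coeFn ψ
  rw [sub_apply, Lp.ext_iff]
  filter_upwards [Lp.coeFn_sub (kernelOperator μ K ψ) (kernelOperator μ K' ψ),
    coeFn_kernelOperator hK hM ψ, coeFn_kernelOperator hK' hM' ψ,
    coeFn_kernelOperator hKK' hN ψ, (integrable_kernel_mul hK hM hψ).prod_right_ae,
    (integrable_kernel_mul hK' hM' hψ).prod_right_ae] with x hsub h h' hd hi hi'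
  rw [hsub, Pi.sub_apply, h, h', hd, ← integral_sub hi hi']
  simp only [sub_mul]

theorem isCompactOperator_kernelOperator_of_finite_sum {ι : Type*} [Fintype ι]
    {a b : ι → α → ℝ} (ha : ∀ i, Integrable (a i) μ) (hb : ∀ i, MemLp (b i) ∞ μ)
    (hK : AEStronglyMeasurable (uncurry fun x y => ∑ i, a i x * b i y) (μ.prod μ)) {M : ℝ≥0}
    (hM : ∀ᵐ y ∂μ, ∫⁻ x, ‖∑ i, a i x * b i y‖ₑ ∂μ ≤ M) :
    IsCompactOperator (kernelOperator μ fun x y => ∑ i, a i x * b i y) := by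
  set T := kernelOperator μ fun x y => ∑ i, a i x * b i y
  set V := Submodule.span ℝ (Set.range fun i => (ha i).toL1 (a i))
  have : FiniteDimensional ℝ V := FiniteDimensional.span_of_finite ℝ (Set.finite_range _)
  have hbψ (ψ : Lp ℝ 1 μ) (i : ι) : Integrable (fun y => b i y * ψ y) μ :=
    (L1.integrable_coeFn ψ).mul_of_top_right (hb i)
  have hT (ψ : Lp ℝ 1 μ) : T ψ = ∑ i, (∫ y, b i y * ψ y ∂μ) • (ha i).toL1 (a i) := by
    have hterm : ∀ᵐ x ∂μ, ∀ i, ((∫ y, b i y * ψ y ∂μ) • (ha i).toL1 (a i)) x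
        = (∫ y, b i y * ψ y ∂μ) * a i x := by
      refine ae_all_iff.2 fun i => ?_
      filter_upwards [Lp.coeFn_smul (∫ y, b i y * ψ y ∂μ) ((ha i).toL1 (a i)),
        (ha i).coeFn_toL1] with x hs hx
      rw [hs, Pi.smul_apply, hx, smul_eq_mul]
    rw [Lp.ext_iff]
    filter_upwards [coeFn_kernelOperator hK hM ψ, Lp.coeFn_fun_finsetSum Finset.univ
      fun i => (∫ y, b i y * ψ y ∂μ) • (ha i).toL1 (a i), hterm] with x hx hsum hterm
    refine hx.trans ?_
    simp only [hsum, hterm, Finset.sum_mul, mul_assoc]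
    rw [integral_finsetSum _ fun i _ => (hbψ ψ i).const_mul _]
    simp only [integral_const_mul, mul_comm]
  have hV (ψ : Lp ℝ 1 μ) : T ψ ∈ V := hT ψ ▸ Submodule.sum_mem _ fun i _ =>
    Submodule.smul_mem _ _ (Submodule.subset_span ⟨i, rfl⟩)
  exact (isCompactOperator_of_locallyCompactSpace_dom (T.codRestrict V hV)).clm_comp V.subtypeL

theorem exists_isCompactOperator_norm_kernelOperator_sub_le [TopologicalSpace α]
    [OpensMeasurableSpace α] (hK : Measurable (uncurry K)) {F : Set α} (hF : IsCompact F)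
    (hμF : ∀ᵐ y ∂μ, y ∈ F) {M : ℝ≥0} (hM : ∀ y ∈ F, ∫⁻ x, ‖K x y‖ₑ ∂μ ≤ M)
    (hcont : ∀ y₀ ∈ F, Tendsto (fun y => ∫⁻ x, ‖K x y - K x y₀‖ₑ ∂μ) (𝓝[F] y₀) (𝓝 0))
    {ε : ℝ≥0} (hε : 0 < ε) :
    ∃ S : Lp ℝ 1 μ →L[ℝ] Lp ℝ 1 μ, IsCompactOperator S ∧ ‖kernelOperator μ K - S‖ ≤ ε := by
  obtain ⟨n, z, A, hzF, hA, hdisj, hcov, hclose⟩ := hF.exists_measurable_partition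
    (P := fun y z => ∫⁻ x, ‖K x y - K x z‖ₑ ∂μ ≤ ε) fun z hz =>
      (hcont z hz).eventually (ge_mem_nhds (ENNReal.coe_pos.2 hε))
  set K' : α → α → ℝ := fun x y => ∑ i, K x (z i) * (A i).indicator 1 y
  have hK' : ∀ y ∈ F, ∃ i, y ∈ A i ∧ ∀ x, K' x y = K x (z i) := by
    intro y hy
    obtain ⟨i, hi⟩ := Set.mem_iUnion.1 (hcov hy)
    refine ⟨i, hi, fun x => ?_⟩
    simp only [K']
    rw [Finset.sum_eq_single i (fun j _ hji => ?_) (by simp), Set.indicator_of_mem hi,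
      Pi.one_apply, mul_one]
    rw [Set.indicator_of_notMem (Set.disjoint_left.1 (hdisj hji.symm) hi), mul_zero]
  have hK'm : Measurable (uncurry K') := Finset.measurable_sum _ fun i _ =>
    (hK.of_uncurry_right.comp measurable_fst).mul
      ((measurable_one.indicator (hA i)).comp measurable_snd)
  have hM' : ∀ᵐ y ∂μ, ∫⁻ x, ‖K' x y‖ₑ ∂μ ≤ M := hμF.mono fun y hy => by
    obtain ⟨i, -, hi⟩ := hK' y hy
    simpa only [hi] using hM _ (hzF i)
  have hN : ∀ᵐ y ∂μ, ∫⁻ x, ‖K x y - K' x y‖ₑ ∂μ ≤ ε := hμF.mono fun y hy => by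
    obtain ⟨i, hyA, hi⟩ := hK' y hy
    simpa only [hi] using hclose i y hyA hy
  refine ⟨kernelOperator μ K', ?_, norm_kernelOperator_sub_le hK.aestronglyMeasurable
    (hμF.mono hM) hK'm.aestronglyMeasurable hM' hN⟩
  exact isCompactOperator_kernelOperator_of_finite_sum
    (fun i => ⟨hK.of_uncurry_right.aestronglyMeasurable,
      (hM _ (hzF i)).trans_lt ENNReal.coe_lt_top⟩)
    (fun i => (memLp_top_const 1).indicator (hA i)) hK'm.aestronglyMeasurable hM'

theorem isCompactOperator_kernelOperator [TopologicalSpace α] [OpensMeasurableSpace α]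
    (hK : Measurable (uncurry K)) {F : Set α} (hF : IsCompact F) (hμF : ∀ᵐ y ∂μ, y ∈ F) {M : ℝ≥0}
    (hM : ∀ y ∈ F, ∫⁻ x, ‖K x y‖ₑ ∂μ ≤ M)
    (hcont : ∀ y₀ ∈ F, Tendsto (fun y => ∫⁻ x, ‖K x y - K x y₀‖ₑ ∂μ) (𝓝[F] y₀) (𝓝 0)) :
    IsCompactOperator (kernelOperator μ K) := by
  refine isClosed_setOfPred_isCompactOperator.closure_subset
    (Metric.mem_closure_iff.2 fun ε hε => ?_)
  obtain ⟨S, hS, hTS⟩ := exists_isCompactOperator_norm_kernelOperator_sub_le hK hF hμF hM hcont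
    (Real.toNNReal_pos.2 (half_pos hε))
  rw [Real.coe_toNNReal _ (half_pos hε).le] at hTS
  exact ⟨S, hS, by rw [dist_eq_norm]; linarith⟩

end KernelOperator

theorem abs_rpow_sub_rpow_le {a b r R t : ℝ} (hr : 0 < r) (ha : a ∈ Set.Icc r R)
    (hb : b ∈ Set.Icc r R) : |a ^ t - b ^ t| ≤ |t| * max (r ^ (t - 1)) (R ^ (t - 1)) * |a - b| := by
  have hderiv : ∀ c ∈ Set.Icc r R,
      HasDerivWithinAt (fun c : ℝ => c ^ t) (t * c ^ (t - 1)) (Set.Icc r R) c := fun c hc =>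
    (Real.hasDerivAt_rpow_const (Or.inl (hr.trans_le hc.1).ne')).hasDerivWithinAt
  have hbound : ∀ c ∈ Set.Icc r R, ‖t * c ^ (t - 1)‖ ≤ |t| * max (r ^ (t - 1)) (R ^ (t - 1)) := by
    rintro c ⟨hrc, hcR⟩
    have hc : 0 < c := hr.trans_le hrc
    rw [Real.norm_eq_abs, abs_mul, abs_of_pos (Real.rpow_pos_of_pos hc _)]
    gcongr
    rcases le_total 0 (t - 1) with h | h
    · exact le_max_of_le_right (Real.rpow_le_rpow hc.le hcR h)
    · exact le_max_of_le_left (Real.rpow_le_rpow_of_nonpos hr hrc h)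
  simpa only [Real.norm_eq_abs] using
    (convex_Icc r R).norm_image_sub_le_of_norm_hasDerivWithin_le hderiv hbound hb ha

theorem tendsto_ofReal_mul_rpow_nhds_zero {C β : ℝ} (hβ : 0 < β) :
    Tendsto (fun r : ℝ => ENNReal.ofReal (C * r ^ β)) (𝓝 0) (𝓝 0) := by
  have h : Continuous fun r : ℝ => C * r ^ β :=
    continuous_const.mul (continuous_id.rpow_const fun _ => Or.inr hβ.le)
  simpa [Real.zero_rpow hβ.ne'] using ENNReal.tendsto_ofReal (h.tendsto 0)

theorem closedBall_subset_union_annuli {E : Type*} [PseudoMetricSpace E] (y : E) (r : ℝ) :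
    closedBall y r ⊆
      closedBall y 0 ∪ ⋃ k : ℕ, closedBall y (r * 2⁻¹ ^ k) \ closedBall y (r * 2⁻¹ ^ k / 2) := by
  intro x hx
  rcases eq_or_ne (dist x y) 0 with h | h
  · exact Or.inl (mem_closedBall.2 h.le)
  · right
    have hd : 0 < dist x y := lt_of_le_of_ne dist_nonneg (Ne.symm h)
    obtain ⟨k, hk, hk'⟩ := exists_nat_pow_near (x := r / dist x y) (y := (2 : ℝ))
      ((one_le_div hd).2 (mem_closedBall.1 hx)) one_lt_two
    refine Set.mem_iUnion.2 ⟨k, mem_closedBall.2 ?_, fun hx' => ?_⟩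
    · rw [le_div_iff₀ hd] at hk
      rw [inv_pow, ← div_eq_mul_inv, le_div_iff₀ (by positivity)]
      linarith
    · rw [div_lt_iff₀ hd, pow_succ] at hk'
      have := mem_closedBall.1 hx'
      rw [inv_pow, ← div_eq_mul_inv, div_div, le_div_iff₀ (by positivity)] at this
      linarith

theorem abs_dist_rpow_sub_dist_rpow_le {E : Type*} [PseudoMetricSpace E] {x y y₀ : E}
    {t r R : ℝ} (hr : 0 < r) (hx : 2 * r < dist x y₀) (hxR : dist x y₀ ≤ R)
    (hy : dist y y₀ ≤ r) :
    |dist x y ^ t - dist x y₀ ^ t| ≤ |t| * max (r ^ (t - 1)) ((R + r) ^ (t - 1)) * dist y y₀ := by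
  have hyy₀ : |dist x y - dist x y₀| ≤ dist y y₀ := by
    simpa only [dist_comm x] using abs_dist_sub_le y y₀ x
  have hxy := abs_le.1 hyy₀
  refine (abs_rpow_sub_rpow_le (R := R + r) hr ⟨?_, ?_⟩ ⟨?_, ?_⟩).trans ?_ <;> try linarith
  gcongr

section DistKernel

variable {E : Type*} [PseudoMetricSpace E] [MeasurableSpace E] {μ : Measure E}

theorem measure_closedBall_zero_of_measure_closedBall_le {C γ : ℝ} (hγ : 0 < γ)
    (hμ : ∀ y r, 0 < r → μ (closedBall y r) ≤ ENNReal.ofReal (C * r ^ γ)) (y : E) :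
    μ (closedBall y 0) = 0 := by
  have hlim : Tendsto (fun r : ℝ => ENNReal.ofReal (C * r ^ γ)) (𝓝[>] 0) (𝓝 0) :=
    (tendsto_ofReal_mul_rpow_nhds_zero hγ).mono_left nhdsWithin_le_nhds
  refine le_antisymm (ge_of_tendsto hlim (eventually_nhdsWithin_of_forall fun r hr => ?_)) zero_le
  exact (measure_mono (closedBall_subset_closedBall (le_of_lt hr))).trans (hμ y r hr)

theorem setLIntegral_annulus_dist_rpow_le [OpensMeasurableSpace E] {C γ t : ℝ}
    (hμ : ∀ y r, 0 < r → μ (closedBall y r) ≤ ENNReal.ofReal (C * r ^ γ)) (y : E) {ρ : ℝ}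
    (hρ : 0 < ρ) :
    ∫⁻ x in closedBall y ρ \ closedBall y (ρ / 2), ENNReal.ofReal (dist x y ^ t) ∂μ ≤
      ENNReal.ofReal ((ρ / 2) ^ t + ρ ^ t) * ENNReal.ofReal (C * ρ ^ γ) := by
  have hpt : ∀ x ∈ closedBall y ρ \ closedBall y (ρ / 2),
      ENNReal.ofReal (dist x y ^ t) ≤ ENNReal.ofReal ((ρ / 2) ^ t + ρ ^ t) := by
    rintro x ⟨hx, hx'⟩
    have hx' : ρ / 2 < dist x y := lt_of_not_ge fun h => hx' (mem_closedBall.2 h)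
    refine ENNReal.ofReal_le_ofReal ?_
    rcases le_total 0 t with ht | ht
    · linarith [Real.rpow_le_rpow dist_nonneg (mem_closedBall.1 hx) ht,
        Real.rpow_nonneg (half_pos hρ).le t]
    · linarith [Real.rpow_le_rpow_of_nonpos (half_pos hρ) hx'.le ht, Real.rpow_nonneg hρ.le t]
  refine (setLIntegral_mono measurable_const hpt).trans ?_
  rw [setLIntegral_const]
  gcongr
  exact (measure_mono Set.sdiff_subset).trans (hμ y ρ hρ)

theorem exists_lintegral_closedBall_dist_rpow_le [OpensMeasurableSpace E] {C γ t : ℝ}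
    (hC : 0 ≤ C) (hγ : 0 < γ) (htγ : 0 < t + γ)
    (hμ : ∀ y r, 0 < r → μ (closedBall y r) ≤ ENNReal.ofReal (C * r ^ γ)) :
    ∃ C' : ℝ, ∀ y r, 0 < r →
      ∫⁻ x in closedBall y r, ENNReal.ofReal (dist x y ^ t) ∂μ ≤
        ENNReal.ofReal (C' * r ^ (t + γ)) := by
  set q : ℝ := 2⁻¹ ^ (t + γ)
  have hq0 : 0 < q := by positivity
  have hq1 : q < 1 := Real.rpow_lt_one (by norm_num) (by norm_num) htγ
  set c : ℝ := (2⁻¹ ^ t + 1) * C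
  refine ⟨c * (1 - q)⁻¹, fun y r hr => ?_⟩
  have hann (k : ℕ) : ∫⁻ x in closedBall y (r * 2⁻¹ ^ k) \ closedBall y (r * 2⁻¹ ^ k / 2),
      ENNReal.ofReal (dist x y ^ t) ∂μ ≤ ENNReal.ofReal (c * r ^ (t + γ) * q ^ k) := by
    set ρ := r * 2⁻¹ ^ k
    have hρ : 0 < ρ := by positivity
    have hρq : ρ ^ t * ρ ^ γ = r ^ (t + γ) * q ^ k := by
      rw [← Real.rpow_add hρ, Real.mul_rpow hr.le (by positivity),
        ← Real.rpow_pow_comm (by norm_num)]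
    refine (setLIntegral_annulus_dist_rpow_le hμ y hρ).trans_eq ?_
    rw [← ENNReal.ofReal_mul (by positivity), mul_assoc c, ← hρq, Real.div_rpow hρ.le zero_le_two]
    simp only [c, Real.inv_rpow zero_le_two]
    congr 1
    ring
  have hsum : Summable fun k : ℕ => c * r ^ (t + γ) * q ^ k :=
    (summable_geometric_of_lt_one hq0.le hq1).mul_left _
  calc ∫⁻ x in closedBall y r, ENNReal.ofReal (dist x y ^ t) ∂μ
      ≤ ∫⁻ x in closedBall y 0 ∪ ⋃ k : ℕ, closedBall y (r * 2⁻¹ ^ k) \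
          closedBall y (r * 2⁻¹ ^ k / 2), ENNReal.ofReal (dist x y ^ t) ∂μ :=
        lintegral_mono_set (closedBall_subset_union_annuli y r)
    _ ≤ ∑' k : ℕ, ∫⁻ x in closedBall y (r * 2⁻¹ ^ k) \ closedBall y (r * 2⁻¹ ^ k / 2),
          ENNReal.ofReal (dist x y ^ t) ∂μ := by
        refine (lintegral_union_le _ _ _).trans ?_
        rw [setLIntegral_measure_zero _ _
          (measure_closedBall_zero_of_measure_closedBall_le hγ hμ y), zero_add]
        exact lintegral_iUnion_le _ _
    _ ≤ ∑' k : ℕ, ENNReal.ofReal (c * r ^ (t + γ) * q ^ k) := ENNReal.tsum_le_tsum hann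
    _ = ENNReal.ofReal (c * (1 - q)⁻¹ * r ^ (t + γ)) := by
        rw [← ENNReal.ofReal_tsum_of_nonneg (fun k => by positivity) hsum, tsum_mul_left,
          tsum_geometric_of_lt_one hq0.le hq1]
        ring_nf

theorem lintegral_enorm_dist_rpow_sub_le [OpensMeasurableSpace E] {C β t R r : ℝ}
    (hball : ∀ y r, 0 < r →
      ∫⁻ x in closedBall y r, ENNReal.ofReal (dist x y ^ t) ∂μ ≤ ENNReal.ofReal (C * r ^ β))
    {y₀ y : E} (hR : ∀ᵐ x ∂μ, dist x y₀ ≤ R) (hr : 0 < r) (hy : dist y y₀ ≤ r) :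
    ∫⁻ x, ‖dist x y ^ t - dist x y₀ ^ t‖ₑ ∂μ ≤
      ENNReal.ofReal (C * (3 * r) ^ β) + ENNReal.ofReal (C * (2 * r) ^ β) +
        ENNReal.ofReal (|t| * max (r ^ (t - 1)) ((R + r) ^ (t - 1)) * dist y y₀) * μ Set.univ := by
  set S := closedBall y₀ (2 * r)
  have hS : MeasurableSet S := measurableSet_closedBall
  have hnear : ∫⁻ x in S, ‖dist x y ^ t - dist x y₀ ^ t‖ₑ ∂μ ≤
      ENNReal.ofReal (C * (3 * r) ^ β) + ENNReal.ofReal (C * (2 * r) ^ β) := by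
    have hpt : ∀ x, ‖dist x y ^ t - dist x y₀ ^ t‖ₑ ≤
        ENNReal.ofReal (dist x y ^ t) + ENNReal.ofReal (dist x y₀ ^ t) := fun x => by
      rw [← Real.enorm_eq_ofReal (Real.rpow_nonneg dist_nonneg _),
        ← Real.enorm_eq_ofReal (Real.rpow_nonneg dist_nonneg _)]
      exact enorm_sub_le
    have hSy : S ⊆ closedBall y (3 * r) := fun x hx => by
      rw [mem_closedBall] at hx ⊢
      linarith [dist_triangle x y₀ y, dist_comm y y₀]
    calc _ ≤ ∫⁻ x in S, ENNReal.ofReal (dist x y ^ t) + ENNReal.ofReal (dist x y₀ ^ t) ∂μ :=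
          lintegral_mono hpt
      _ = ∫⁻ x in S, ENNReal.ofReal (dist x y ^ t) ∂μ +
            ∫⁻ x in S, ENNReal.ofReal (dist x y₀ ^ t) ∂μ :=
          lintegral_add_left
            ((continuous_id.dist continuous_const).measurable.pow_const t).ennreal_ofReal _
      _ ≤ _ := add_le_add ((lintegral_mono_set hSy).trans (hball y _ (by positivity)))
          (hball y₀ _ (by positivity))
  have hfar : ∫⁻ x in Sᶜ, ‖dist x y ^ t - dist x y₀ ^ t‖ₑ ∂μ ≤
      ENNReal.ofReal (|t| * max (r ^ (t - 1)) ((R + r) ^ (t - 1)) * dist y y₀) * μ Set.univ := by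
    have hpt : ∀ᵐ x ∂μ.restrict Sᶜ, ‖dist x y ^ t - dist x y₀ ^ t‖ₑ ≤
        ENNReal.ofReal (|t| * max (r ^ (t - 1)) ((R + r) ^ (t - 1)) * dist y y₀) := by
      filter_upwards [ae_restrict_of_ae hR, ae_restrict_mem hS.compl] with x hxR hxS
      rw [Real.enorm_eq_ofReal_abs]
      exact ENNReal.ofReal_le_ofReal (abs_dist_rpow_sub_dist_rpow_le hr
        (lt_of_not_ge fun h => hxS (mem_closedBall.2 h)) hxR hy)
    calc _ ≤ ∫⁻ _ in Sᶜ, ENNReal.ofReal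
            (|t| * max (r ^ (t - 1)) ((R + r) ^ (t - 1)) * dist y y₀) ∂μ := lintegral_mono_ae hpt
      _ ≤ _ := by
          rw [setLIntegral_const]
          exact mul_le_mul_right (measure_mono (Set.subset_univ _)) _
  rw [← lintegral_add_compl _ hS]
  exact add_le_add hnear hfar

theorem tendsto_lintegral_enorm_dist_rpow_sub [OpensMeasurableSpace E] [IsFiniteMeasure μ]
    {C β t R : ℝ} (hβ : 0 < β)
    (hball : ∀ y r, 0 < r →
      ∫⁻ x in closedBall y r, ENNReal.ofReal (dist x y ^ t) ∂μ ≤ ENNReal.ofReal (C * r ^ β))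
    {y₀ : E} (hR : ∀ᵐ x ∂μ, dist x y₀ ≤ R) :
    Tendsto (fun y => ∫⁻ x, ‖dist x y ^ t - dist x y₀ ^ t‖ₑ ∂μ) (𝓝 y₀) (𝓝 0) := by
  refine ENNReal.tendsto_nhds_zero.2 fun ε hε => ?_
  have hε2 : 0 < ε / 2 := ENNReal.half_pos hε.ne'
  have hnear : Tendsto (fun r : ℝ => ENNReal.ofReal (C * (3 * r) ^ β) +
      ENNReal.ofReal (C * (2 * r) ^ β)) (𝓝[>] 0) (𝓝 0) := by
    refine Tendsto.mono_left ?_ nhdsWithin_le_nhds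
    simpa using ((tendsto_ofReal_mul_rpow_nhds_zero hβ).comp
      ((continuous_const_mul 3).tendsto' 0 0 (mul_zero 3))).add
      ((tendsto_ofReal_mul_rpow_nhds_zero hβ).comp
      ((continuous_const_mul 2).tendsto' 0 0 (mul_zero 2)))
  obtain ⟨r, hr, hr0⟩ :=
    ((hnear.eventually (gt_mem_nhds hε2)).and self_mem_nhdsWithin).exists
  set L := |t| * max (r ^ (t - 1)) ((R + r) ^ (t - 1))
  have hfar : Tendsto (fun y => ENNReal.ofReal (L * dist y y₀) * μ Set.univ) (𝓝 y₀) (𝓝 0) := by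
    have h : Tendsto (fun y => ENNReal.ofReal (L * dist y y₀)) (𝓝 y₀) (𝓝 0) := by
      simpa using ENNReal.tendsto_ofReal
        ((continuous_const.mul (continuous_id.dist continuous_const)).tendsto y₀ (f := fun y =>
          L * dist y y₀))
    simpa using ENNReal.Tendsto.mul_const h (Or.inr (measure_ne_top μ Set.univ))
  filter_upwards [hfar.eventually (gt_mem_nhds hε2), closedBall_mem_nhds y₀ hr0] with y hy hyr
  calc _ ≤ _ := lintegral_enorm_dist_rpow_sub_le hball hR hr0 (mem_closedBall.1 hyr)
    _ ≤ ε / 2 + ε / 2 := add_le_add hr.le hy.le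
    _ = ε := ENNReal.add_halves ε

theorem lintegral_enorm_dist_rpow_le {C β t R : ℝ}
    (hball : ∀ y r, 0 < r →
      ∫⁻ x in closedBall y r, ENNReal.ofReal (dist x y ^ t) ∂μ ≤ ENNReal.ofReal (C * r ^ β))
    {y : E} (hR : 0 < R) (hyR : ∀ᵐ x ∂μ, dist x y ≤ R) :
    ∫⁻ x, ‖dist x y ^ t‖ₑ ∂μ ≤ ENNReal.ofReal (C * R ^ β) := by
  rw [← Measure.restrict_eq_self_of_ae_mem (s := closedBall y R) hyR]
  simp_rw [Real.enorm_eq_ofReal (Real.rpow_nonneg dist_nonneg _)]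
  exact hball y R hR

end DistKernel

theorem kernel_operator_weakly_compact_general {d : ℕ} (hd : 2 ≤ d)
    (α : ℝ) (hα : 0 < α)
    (Ω : Set (EuclideanSpace ℝ (Fin d))) (hΩb : IsBounded Ω)
    (π : Measure (EuclideanSpace ℝ (Fin d))) [IsFiniteMeasure π]
    (hsupp : π {x | x ∉ frontier Ω} = 0)
    (C : ℝ) (hC : 0 < C)
    (hAhlfors : ∀ (x : EuclideanSpace ℝ (Fin d)) (r : ℝ), 0 < r →
      π (Metric.closedBall x r) ≤ ENNReal.ofReal (C * r ^ ((d : ℝ) - 1))) :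
    ∃ T : Lp ℝ 1 π →L[ℝ] Lp ℝ 1 π,
      (∀ ψ : Lp ℝ 1 π, ∀ᵐ x ∂π,
        T ψ x = ∫ y, ‖x - y‖ ^ (1 + 2 * α - (d : ℝ)) * ψ y ∂π) ∧
      IsWeaklyCompactOperator ⇑T := by
  set t : ℝ := 1 + 2 * α - d
  have hγ : (0 : ℝ) < d - 1 := by linarith [show (2 : ℝ) ≤ d by exact_mod_cast hd]
  obtain ⟨C', hball⟩ := exists_lintegral_closedBall_dist_rpow_le (t := t) hC.le hγ
    (by linarith) hAhlfors
  have hFb : IsBounded (frontier Ω) := hΩb.closure.subset frontier_subset_closure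
  have hπF : ∀ᵐ x ∂π, x ∈ frontier Ω := ae_iff.2 hsupp
  have hdiam : ∀ y ∈ frontier Ω, ∀ᵐ x ∂π, dist x y ≤ diam (frontier Ω) := fun y hy =>
    hπF.mono fun x hx => dist_le_diam_of_mem hFb hx hy
  have hK : Measurable (uncurry fun x y : EuclideanSpace ℝ (Fin d) => dist x y ^ t) :=
    continuous_dist.measurable.pow_const t
  have hcol : ∀ y ∈ frontier Ω, ∫⁻ x, ‖dist x y ^ t‖ₑ ∂π ≤
      (C' * (diam (frontier Ω) + 1) ^ (t + (d - 1))).toNNReal := fun y hy =>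
    lintegral_enorm_dist_rpow_le hball (by positivity)
      ((hdiam y hy).mono fun x hx => by linarith)
  have hcompact := isCompactOperator_kernelOperator hK
    (isCompact_of_isClosed_isBounded isClosed_frontier hFb) hπF hcol fun y hy =>
      (tendsto_lintegral_enorm_dist_rpow_sub (by linarith) hball (hdiam y hy)).mono_left
        nhdsWithin_le_nhds
  refine ⟨_, fun ψ => ?_, hcompact.isWeaklyCompactOperator⟩
  filter_upwards [coeFn_kernelOperator hK.aestronglyMeasurable (hπF.mono hcol) ψ] with x hx
  rw [hx]
  simp only [dist_eq_norm]

/-- The integral operator `𝒥₁` with kernel `|x-y|^{1+2α-d}` (`α > 0`) on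
`L¹(∂Ω, π)`, where `π` is the surface measure of a compact `C¹` hypersurface `∂Ω ⊆ ℝᵈ`
(encoded through its upper Ahlfors `(d-1)`-regularity), is a well-defined bounded operator
and is weakly compact. -/
theorem kernel_operator_weakly_compact {d : ℕ} (hd : 2 ≤ d)
    (α : ℝ) (hα : 0 < α) (hα1 : α < 1)
    (Ω : Set (EuclideanSpace ℝ (Fin d))) (hΩo : IsOpen Ω) (hΩb : IsBounded Ω)
    (π : Measure (EuclideanSpace ℝ (Fin d))) [IsFiniteMeasure π]
    (hsupp : π {x | x ∉ frontier Ω} = 0)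
    (C : ℝ) (hC : 0 < C)
    (hAhlfors : ∀ (x : EuclideanSpace ℝ (Fin d)) (r : ℝ), 0 < r →
      π (Metric.closedBall x r) ≤ ENNReal.ofReal (C * r ^ ((d : ℝ) - 1))) :
    ∃ T : Lp ℝ 1 π →L[ℝ] Lp ℝ 1 π,
      (∀ ψ : Lp ℝ 1 π, ∀ᵐ x ∂π,
        T ψ x = ∫ y, ‖x - y‖ ^ (1 + 2 * α - (d : ℝ)) * ψ y ∂π) ∧
      IsWeaklyCompactOperator ⇑T :=
  kernel_operator_weakly_compact_general hd α hα Ω hΩb π hsupp C hC hAhlfors
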